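/- Every invertible northwest-triangular matrix N over F_2 can be computed by a circuit of adjacent CNOT gates of depth at most 3n; i.e. there is a circuit R of depth at most 3n with N·R = I. -/

import Mathlib

open Matrix

/-- The matrix with a single `1` in position `(i, j)`, over `F_2`. -/
def stdE (n : ℕ) (i j : Fin n) : Matrix (Fin n) (Fin n) (ZMod 2) :=
  Matrix.single i j 1

/-- `A` is an adjacent elementary ("adjacent CNOT") matrix:
`A = 1 + E_{i,i+1}` or `A = 1 + E_{i+1,i}` (0-indexed). -/
def IsAdjElem (n : ℕ) (A : Matrix (Fin n) (Fin n) (ZMod 2)) : Prop :=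
  ∃ i : ℕ, ∃ h : i + 1 < n,
    A = 1 + stdE n ⟨i, by omega⟩ ⟨i + 1, h⟩ ∨ A = 1 + stdE n ⟨i + 1, h⟩ ⟨i, by omega⟩

/-- The matrix of a gate `(i, d)`.  As a column operation (acting on the right),
`(i, true)` adds column `i` into column `i+1` and `(i, false)` adds column `i+1`
into column `i` (0-indexed). -/
def gateMat (n : ℕ) (g : ℕ × Bool) : Matrix (Fin n) (Fin n) (ZMod 2) :=
  if h : g.1 + 1 < n then
    if g.2 then 1 + stdE n ⟨g.1, by omega⟩ ⟨g.1 + 1, h⟩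
    else 1 + stdE n ⟨g.1 + 1, h⟩ ⟨g.1, by omega⟩
  else 1

/-- The matrix computed by a sequence of gates applied in order to the identity. -/
def listMat (n : ℕ) (L : List (ℕ × Bool)) : Matrix (Fin n) (Fin n) (ZMod 2) :=
  (L.map (gateMat n)).prod

/-- A valid time-slice on `n` wires: all gates in range, with pairwise disjoint
wire pairs `{i, i+1}`. -/
def ValidSlice (n : ℕ) (s : List (ℕ × Bool)) : Prop :=
  (∀ g ∈ s, g.1 + 1 < n) ∧
    s.Pairwise fun g g' => g.1 + 2 ≤ g'.1 ∨ g'.1 + 2 ≤ g.1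

/-- A valid circuit: a sequence of valid time-slices. -/
def ValidCircuit (n : ℕ) (C : List (List (ℕ × Bool))) : Prop :=
  ∀ s ∈ C, ValidSlice n s

/-- The matrix computed by a circuit (time-slices applied in order). -/
def circuitMat (n : ℕ) (C : List (List (ℕ × Bool))) : Matrix (Fin n) (Fin n) (ZMod 2) :=
  (C.map (listMat n)).prod

/-- The size (total number of gates) of a circuit. -/
def circuitSize (C : List (List (ℕ × Bool))) : ℕ := (C.map List.length).sum

/-- The reversal permutation matrix: `R i j = 1` iff `i + j = n + 1` (1-indexed). -/
def revMat (n : ℕ) : Matrix (Fin n) (Fin n) (ZMod 2) :=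
  Matrix.of fun i j => if i.val + j.val + 1 = n then 1 else 0

/-- Top-left `k × k` block. -/
def blkW (n k : ℕ) (h : k ≤ n) (M : Matrix (Fin n) (Fin n) (ZMod 2)) :
    Matrix (Fin k) (Fin k) (ZMod 2) :=
  M.submatrix (fun i => ⟨i.val, lt_of_lt_of_le i.isLt h⟩)
    (fun j => ⟨j.val, lt_of_lt_of_le j.isLt h⟩)

/-- Top-right `k × (n-k)` block. -/
def blkX (n k : ℕ) (h : k ≤ n) (M : Matrix (Fin n) (Fin n) (ZMod 2)) :
    Matrix (Fin k) (Fin (n - k)) (ZMod 2) :=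
  M.submatrix (fun i => ⟨i.val, lt_of_lt_of_le i.isLt h⟩)
    (fun j => ⟨k + j.val, by have := j.isLt; omega⟩)

/-- Bottom-left `(n-k) × k` block. -/
def blkY (n k : ℕ) (h : k ≤ n) (M : Matrix (Fin n) (Fin n) (ZMod 2)) :
    Matrix (Fin (n - k)) (Fin k) (ZMod 2) :=
  M.submatrix (fun i => ⟨k + i.val, by have := i.isLt; omega⟩)
    (fun j => ⟨j.val, lt_of_lt_of_le j.isLt h⟩)

/-- Bottom-right `(n-k) × (n-k)` block. -/
def blkZ (n k : ℕ) (h : k ≤ n) (M : Matrix (Fin n) (Fin n) (ZMod 2)) :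
    Matrix (Fin (n - k)) (Fin (n - k)) (ZMod 2) :=
  M.submatrix (fun i => ⟨k + i.val, by have := i.isLt; omega⟩)
    (fun j => ⟨k + j.val, by have := j.isLt; omega⟩)

/-- `N` is northwest-triangular: `N i j = 0` whenever `i + j > n + 1` (1-indexed),
i.e. `i.val + j.val ≥ n` (0-indexed). -/
def IsNW (n : ℕ) (N : Matrix (Fin n) (Fin n) (ZMod 2)) : Prop :=
  ∀ i j : Fin n, n ≤ i.val + j.val → N i j = 0


/-! ### Auxiliary development: odd-even transposition routing -/

/-- position at time `t` of the token that started at position `j`. -/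
def Tt (n t j : ℕ) : ℕ :=
  if j % 2 = 0 then (if j + t < n then j + t else 2*n - 1 - (j + t))
  else (if t ≤ j then j - t else t - j - 1)

/-- start position of the token at position `p` at time `t`. -/
def Tinv (n t p : ℕ) : ℕ :=
  if p % 2 = t % 2 then (if t ≤ p then p - t else t - p - 1)
  else (if p + t < n then p + t else 2*n - 1 - (p + t))

lemma Tt_zero (n j : ℕ) (hj : j < n) : Tt n 0 j = j := by
  unfold Tt; split_ifs <;> omega

lemma Tt_last (n j : ℕ) (hj : j < n) : Tt n n j = n - 1 - j := by
  unfold Tt; split_ifs <;> omega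

lemma Tt_lt (n t j : ℕ) (hj : j < n) (ht : t ≤ n) : Tt n t j < n := by
  unfold Tt; split_ifs <;> omega

lemma Tinv_lt (n t p : ℕ) (hp : p < n) (ht : t ≤ n) : Tinv n t p < n := by
  unfold Tinv; split_ifs <;> omega

lemma Tt_Tinv (n t p : ℕ) (hp : p < n) (ht : t ≤ n) : Tt n t (Tinv n t p) = p := by
  unfold Tt Tinv; split_ifs <;> omega

lemma Tinv_Tt (n t j : ℕ) (hj : j < n) (ht : t ≤ n) : Tinv n t (Tt n t j) = j := by
  unfold Tt Tinv; split_ifs <;> omega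

lemma Tt_inj (n t j j' : ℕ) (hj : j < n) (hj' : j' < n) (ht : t ≤ n)
    (h : Tt n t j = Tt n t j') : j = j' := by
  have h1 := Tinv_Tt n t j hj ht
  have h2 := Tinv_Tt n t j' hj' ht
  rw [h] at h1; omega

lemma Tt_step_right (n t j : ℕ) (hj : j < n) (ht : t < n)
    (hpar : Tt n t j % 2 = t % 2) (hlt : Tt n t j + 1 < n) :
    Tt n (t+1) j = Tt n t j + 1 := by
  unfold Tt at *; split_ifs at * <;> omega

lemma Tt_step_stay (n t j : ℕ) (hj : j < n) (ht : t < n)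
    (hpar : Tt n t j % 2 = t % 2) (hlt : Tt n t j + 1 = n) :
    Tt n (t+1) j = Tt n t j := by
  unfold Tt at *; split_ifs at * <;> omega

lemma Tt_step_left (n t j : ℕ) (hj : j < n) (ht : t < n)
    (hpar : Tt n t j % 2 ≠ t % 2) :
    Tt n (t+1) j = Tt n t j - 1 := by
  unfold Tt at *; split_ifs at * <;> omega

lemma Tt_move (n t j : ℕ) (hj : j < n) (ht : t < n) :
    Tt n t j ≤ Tt n (t+1) j + 1 ∧ Tt n (t+1) j ≤ Tt n t j + 1 := by
  unfold Tt; split_ifs <;> omega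

lemma tok_order (n t jL jR : ℕ) (ht : t < n) (hL : jL < n) (hR : jR < n)
    (hpar : Tt n t jL % 2 = t % 2) (hlt : Tt n t jL + 1 < n)
    (heq : Tt n t jR = Tt n t jL + 1) : jL < jR := by
  unfold Tt at *; split_ifs at * <;> omega

/-! ### Column operations -/

lemma gate_true_apply {n : ℕ} (A : Matrix (Fin n) (Fin n) (ZMod 2)) (p : ℕ) (h : p + 1 < n)
    (i j : Fin n) :
    (A * gateMat n (p, true)) i j
      = if j.val = p + 1 then A i j + A i ⟨p, by omega⟩ else A i j := by
  unfold gateMat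
  rw [dif_pos h, if_pos rfl, mul_add, mul_one, Matrix.add_apply]
  unfold stdE
  by_cases hj : j = (⟨p+1, h⟩ : Fin n)
  · subst hj
    rw [Matrix.mul_single_apply_same, if_pos rfl, mul_one]
  · rw [Matrix.mul_single_apply_of_ne (hbj := hj),
      if_neg (fun hc => hj (Fin.ext hc)), add_zero]

lemma gate_false_apply {n : ℕ} (A : Matrix (Fin n) (Fin n) (ZMod 2)) (p : ℕ) (h : p + 1 < n)
    (i j : Fin n) :
    (A * gateMat n (p, false)) i j
      = if j.val = p then A i j + A i ⟨p + 1, by omega⟩ else A i j := by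
  unfold gateMat
  rw [dif_pos h, if_neg (by simp), mul_add, mul_one, Matrix.add_apply]
  unfold stdE
  by_cases hj : j = (⟨p, by omega⟩ : Fin n)
  · subst hj
    rw [Matrix.mul_single_apply_same, if_pos rfl, mul_one]
  · rw [Matrix.mul_single_apply_of_ne (hbj := hj),
      if_neg (fun hc => hj (Fin.ext hc)), add_zero]

lemma gate_apply_untouched {n : ℕ} (A : Matrix (Fin n) (Fin n) (ZMod 2)) (g : ℕ × Bool)
    (i j : Fin n) (hj : j.val ≠ g.1 ∧ j.val ≠ g.1 + 1) :
    (A * gateMat n g) i j = A i j := by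
  obtain ⟨p, d⟩ := g
  by_cases h : p + 1 < n
  · cases d
    · rw [gate_false_apply A p h, if_neg hj.1]
    · rw [gate_true_apply A p h, if_neg hj.2]
  · unfold gateMat; rw [dif_neg h, mul_one]

/-- columns not touched by any gate of `L` are unchanged -/
lemma slice_untouched {n : ℕ} (L : List (ℕ × Bool)) (A : Matrix (Fin n) (Fin n) (ZMod 2))
    (i j : Fin n) (hj : ∀ g ∈ L, j.val ≠ g.1 ∧ j.val ≠ g.1 + 1) :
    (A * listMat n L) i j = A i j := by
  induction L generalizing A with
  | nil => simp [listMat]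
  | cons g L ih =>
      have : listMat n (g :: L) = gateMat n g * listMat n L := by
        simp [listMat]
      rw [this, ← mul_assoc]
      rw [ih (A * gateMat n g) (fun g' hg' => hj g' (List.mem_cons_of_mem _ hg'))]
      exact gate_apply_untouched A g i j (hj g List.mem_cons_self)

def Dist2 (g g' : ℕ × Bool) : Prop := g.1 + 2 ≤ g'.1 ∨ g'.1 + 2 ≤ g.1

lemma slice_gate {n : ℕ} (L : List (ℕ × Bool)) (A : Matrix (Fin n) (Fin n) (ZMod 2))
    (p : ℕ) (d : Bool) (h : p + 1 < n) (hmem : (p, d) ∈ L)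
    (hpw : L.Pairwise Dist2) (i : Fin n) :
    ((A * listMat n L) i ⟨p, by omega⟩ =
        if d then A i ⟨p, by omega⟩ else A i ⟨p, by omega⟩ + A i ⟨p+1, h⟩) ∧
      ((A * listMat n L) i ⟨p+1, h⟩ =
        if d then A i ⟨p+1, h⟩ + A i ⟨p, by omega⟩ else A i ⟨p+1, h⟩) := by
  induction L generalizing A with
  | nil => simp at hmem
  | cons g L ih =>
      have hLM : listMat n (g :: L) = gateMat n g * listMat n L := by simp [listMat]
      rw [hLM, ← mul_assoc]
      by_cases hg : g = (p, d)
      · subst hg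
        have hunt : ∀ g' ∈ L, p ≠ g'.1 ∧ p ≠ g'.1 + 1 := by
          intro g' hg'
          have := (List.pairwise_cons.mp hpw).1 g' hg'
          unfold Dist2 at this; simp at this ⊢; omega
        have hunt2 : ∀ g' ∈ L, p + 1 ≠ g'.1 ∧ p + 1 ≠ g'.1 + 1 := by
          intro g' hg'
          have := (List.pairwise_cons.mp hpw).1 g' hg'
          unfold Dist2 at this; simp at this ⊢; omega
        constructor
        · rw [slice_untouched L _ i _ (fun g' hg' => hunt g' hg')]
          cases d
          · rw [gate_false_apply A p h, if_pos rfl]; simp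
          · rw [gate_true_apply A p h, if_neg (by simp)]; simp
        · rw [slice_untouched L _ i _ (fun g' hg' => hunt2 g' hg')]
          cases d
          · rw [gate_false_apply A p h, if_neg (by simp)]; simp
          · rw [gate_true_apply A p h, if_pos rfl]; simp
      · have hmem' : (p, d) ∈ L := by
          rcases List.mem_cons.mp hmem with h1 | h1
          · exact absurd h1.symm hg
          · exact h1
        have hd : Dist2 g (p, d) := (List.pairwise_cons.mp hpw).1 _ hmem'
        unfold Dist2 at hd
        have e1 : (A * gateMat n g) i ⟨p, by omega⟩ = A i ⟨p, by omega⟩ :=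
          gate_apply_untouched A g i _ (by simp at hd ⊢; omega)
        have e2 : (A * gateMat n g) i ⟨p+1, h⟩ = A i ⟨p+1, h⟩ :=
          gate_apply_untouched A g i _ (by simp at hd ⊢; omega)
        have := ih (A * gateMat n g) hmem' (List.pairwise_cons.mp hpw).2
        rw [e1, e2] at this
        exact this

/-! ### The round construction -/

def act (n t : ℕ) : List ℕ := (List.range (n-1)).filter (fun p => p % 2 == t % 2)

lemma mem_act {n t p : ℕ} : p ∈ act n t ↔ p < n - 1 ∧ p % 2 = t % 2 := by
  simp [act]

lemma act_pairwise (n t : ℕ) : (act n t).Pairwise (fun a b => a + 2 ≤ b ∨ b + 2 ≤ a) := by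
  unfold act
  refine List.pairwise_filter.mpr ?_
  refine (List.pairwise_lt_range (n := n-1)).imp ?_
  intro a b hab hpa hpb
  simp only [beq_iff_eq] at hpa hpb
  omega

def nuv (n t : ℕ) (A : Matrix (Fin n) (Fin n) (ZMod 2)) (p : ℕ) : ZMod 2 :=
  if h : p + 1 < n then A ⟨n - 1 - Tinv n t (p+1), by omega⟩ ⟨p, by omega⟩ else 0

def slice1 (n t : ℕ) : List (ℕ × Bool) := (act n t).map (fun p => (p, true))
def slice2 (n t : ℕ) : List (ℕ × Bool) := (act n t).map (fun p => (p, false))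
def slice3 (n t : ℕ) (A : Matrix (Fin n) (Fin n) (ZMod 2)) : List (ℕ × Bool) :=
  ((act n t).filter (fun p => decide (nuv n t A p = 0))).map (fun p => (p, true))

lemma pw_slice1 (n t : ℕ) : (slice1 n t).Pairwise Dist2 := by
  rw [slice1, List.pairwise_map]; exact act_pairwise n t

lemma pw_slice2 (n t : ℕ) : (slice2 n t).Pairwise Dist2 := by
  rw [slice2, List.pairwise_map]; exact act_pairwise n t

lemma pw_slice3 (n t : ℕ) (A : Matrix (Fin n) (Fin n) (ZMod 2)) :
    (slice3 n t A).Pairwise Dist2 := by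
  rw [slice3, List.pairwise_map]
  exact List.Pairwise.filter _ (act_pairwise n t)

lemma valid_slice1 (n t : ℕ) : ValidSlice n (slice1 n t) := by
  constructor
  · intro g hg
    simp [slice1, mem_act] at hg
    obtain ⟨p, hp, rfl⟩ := hg
    simpa using by omega
  · exact pw_slice1 n t

lemma valid_slice2 (n t : ℕ) : ValidSlice n (slice2 n t) := by
  constructor
  · intro g hg
    simp [slice2, mem_act] at hg
    obtain ⟨p, hp, rfl⟩ := hg
    simpa using by omega
  · exact pw_slice2 n t

lemma valid_slice3 (n t : ℕ) (A : Matrix (Fin n) (Fin n) (ZMod 2)) :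
    ValidSlice n (slice3 n t A) := by
  constructor
  · intro g hg
    simp [slice3, mem_act] at hg
    obtain ⟨p, hp, rfl⟩ := hg
    simpa using by omega
  · exact pw_slice3 n t A


lemma zmod2_ne_zero {x : ZMod 2} (h : x ≠ 0) : x = 1 := by revert x; decide
lemma z2a (x y : ZMod 2) : x + (y + x) = y := by revert x y; decide
lemma z2b (x y : ZMod 2) : (y + x) + (x + (y + x)) = x + 0 * y := by revert x y; decide
lemma z2c (x y : ZMod 2) : y + x = x + 1 * y := by revert x y; decide
lemma z2d (x : ZMod 2) : x + x = 0 := by revert x; decide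

lemma round_col_untouched (n t : ℕ) (A : Matrix (Fin n) (Fin n) (ZMod 2)) (q : ℕ)
    (hq : q < n) (h1 : ¬(q < n - 1 ∧ q % 2 = t % 2))
    (h2 : q = 0 ∨ ¬(q - 1 < n - 1 ∧ (q - 1) % 2 = t % 2)) (i : Fin n) :
    (((A * listMat n (slice1 n t)) * listMat n (slice2 n t)) * listMat n (slice3 n t A))
        i ⟨q, hq⟩ = A i ⟨q, hq⟩ := by
  have huntact : ∀ p ∈ act n t, q ≠ p ∧ q ≠ p + 1 := by
    intro p hp
    rw [mem_act] at hp
    constructor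
    · intro h; exact h1 (h ▸ hp)
    · intro h
      rcases h2 with h2 | h2
      · omega
      · apply h2; constructor <;> omega
  have hu1 : ∀ g ∈ slice1 n t, q ≠ g.1 ∧ q ≠ g.1 + 1 := by
    intro g hg
    simp only [slice1, List.mem_map] at hg
    obtain ⟨p, hp, rfl⟩ := hg
    exact huntact p hp
  have hu2 : ∀ g ∈ slice2 n t, q ≠ g.1 ∧ q ≠ g.1 + 1 := by
    intro g hg
    simp only [slice2, List.mem_map] at hg
    obtain ⟨p, hp, rfl⟩ := hg
    exact huntact p hp
  have hu3 : ∀ g ∈ slice3 n t A, q ≠ g.1 ∧ q ≠ g.1 + 1 := by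
    intro g hg
    simp only [slice3, List.mem_map, List.mem_filter] at hg
    obtain ⟨p, hp, rfl⟩ := hg
    exact huntact p hp.1
  rw [slice_untouched _ _ i _ hu3, slice_untouched _ _ i _ hu2,
    slice_untouched _ _ i _ hu1]

lemma round_col_active (n t : ℕ) (A : Matrix (Fin n) (Fin n) (ZMod 2)) (p : ℕ)
    (hp : p + 1 < n) (hpar : p % 2 = t % 2) (i : Fin n) :
    (((A * listMat n (slice1 n t)) * listMat n (slice2 n t)) * listMat n (slice3 n t A))
        i ⟨p, by omega⟩ = A i ⟨p+1, hp⟩ ∧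
    (((A * listMat n (slice1 n t)) * listMat n (slice2 n t)) * listMat n (slice3 n t A))
        i ⟨p+1, hp⟩ = A i ⟨p, by omega⟩ + nuv n t A p * A i ⟨p+1, hp⟩ := by
  have hact : p ∈ act n t := mem_act.mpr ⟨by omega, hpar⟩
  have hm1 : ((p, true) : ℕ × Bool) ∈ slice1 n t :=
    List.mem_map.mpr ⟨p, hact, rfl⟩
  have hm2 : ((p, false) : ℕ × Bool) ∈ slice2 n t :=
    List.mem_map.mpr ⟨p, hact, rfl⟩
  have h1 := slice_gate (slice1 n t) A p true hp hm1 (pw_slice1 n t) i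
  simp only [if_pos rfl, if_true] at h1
  set B1 := A * listMat n (slice1 n t) with hB1
  have h2 := slice_gate (slice2 n t) B1 p false hp hm2 (pw_slice2 n t) i
  simp only [Bool.false_eq_true, if_false] at h2
  set B2 := B1 * listMat n (slice2 n t) with hB2
  set x := A i ⟨p, by omega⟩ with hx
  set y := A i ⟨p+1, hp⟩ with hy
  -- B1 : col p = x, col p+1 = y + x ; B2 : col p = x + (y + x), col p+1 = y + x
  by_cases hnu : nuv n t A p = 0
  · have hm3 : ((p, true) : ℕ × Bool) ∈ slice3 n t A := by
      refine List.mem_map.mpr ⟨p, ?_, rfl⟩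
      exact List.mem_filter.mpr ⟨hact, by simpa using hnu⟩
    have h3 := slice_gate (slice3 n t A) B2 p true hp hm3 (pw_slice3 n t A) i
    simp only [if_pos rfl, if_true] at h3
    rw [hnu]
    constructor
    · rw [h3.1, h2.1, h1.1, h1.2]
      exact z2a x y
    · rw [h3.2, h2.2, h2.1, h1.1, h1.2]
      exact z2b x y
  · have hu3 : ∀ g ∈ slice3 n t A, p ≠ g.1 ∧ p ≠ g.1 + 1 := by
      intro g hg
      simp only [slice3, List.mem_map, List.mem_filter] at hg
      obtain ⟨q, hq, rfl⟩ := hg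
      have hq1 := mem_act.mp hq.1
      have hqp : q ≠ p := by
        intro h; subst h; exact hnu (by simpa using hq.2)
      constructor <;> omega
    have hu3' : ∀ g ∈ slice3 n t A, p + 1 ≠ g.1 ∧ p + 1 ≠ g.1 + 1 := by
      intro g hg
      simp only [slice3, List.mem_map, List.mem_filter] at hg
      obtain ⟨q, hq, rfl⟩ := hg
      have hq1 := mem_act.mp hq.1
      have hqp : q ≠ p := by
        intro h; subst h; exact hnu (by simpa using hq.2)
      constructor <;> omega
    rw [zmod2_ne_zero hnu]
    constructor
    · rw [slice_untouched _ _ i _ hu3, h2.1, h1.1, h1.2]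
      exact z2a x y
    · rw [slice_untouched _ _ i _ hu3', h2.2, h1.2]
      exact z2c x y

/-- The invariant: at time `t`, the column at the position of token `i`
has a `1` in row `i`, zeros in all rows `i' > i`, and zeros in all rows
`i' < i` whose tokens have already crossed token `i`. -/
def RInv (n t : ℕ) (A : Matrix (Fin n) (Fin n) (ZMod 2)) : Prop :=
  ∀ i i' p : Fin n, Tt n t (n - 1 - i.val) = p.val →
    (i' = i → A i' p = 1) ∧
    (i.val < i'.val → A i' p = 0) ∧
    (i'.val < i.val → Tt n t (n - 1 - i'.val) < p.val → A i' p = 0)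

lemma inv_last (n : ℕ) (A : Matrix (Fin n) (Fin n) (ZMod 2)) (h : RInv n n A) : A = 1 := by
  ext i' p
  have hp : Tt n n (n - 1 - p.val) = p.val := by
    rw [Tt_last n _ (by omega)]; omega
  have H := h p i' p hp
  rcases lt_trichotomy i'.val p.val with hc | hc | hc
  · rw [H.2.2 hc (by rw [Tt_last n _ (by omega)]; omega)]
    exact (Matrix.one_apply_ne (fun he => by rw [he] at hc; omega)).symm
  · have he : i' = p := Fin.ext hc
    rw [H.1 he, he, Matrix.one_apply_eq]
  · rw [H.2.1 hc]
    exact (Matrix.one_apply_ne (fun he => by rw [he] at hc; omega)).symm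

lemma inv_start (n : ℕ) (N : Matrix (Fin n) (Fin n) (ZMod 2)) (hNW : IsNW n N)
    (hdiag : ∀ i : Fin n, N i ⟨n - 1 - i.val, by omega⟩ = 1) : RInv n 0 N := by
  intro i i' p hp
  rw [Tt_zero n _ (by omega)] at hp
  refine ⟨?_, ?_, ?_⟩
  · intro he
    subst he
    have : p = ⟨n - 1 - i'.val, by omega⟩ := Fin.ext (by simp; omega)
    rw [this]; exact hdiag i'
  · intro hlt
    exact hNW i' p (by omega)
  · intro hlt h2
    rw [Tt_zero n _ (by omega)] at h2
    omega

lemma inv_step (n t : ℕ) (ht : t < n) (A : Matrix (Fin n) (Fin n) (ZMod 2))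
    (hA : RInv n t A) :
    RInv n (t+1) (((A * listMat n (slice1 n t)) * listMat n (slice2 n t)) *
      listMat n (slice3 n t A)) := by
  intro i i' p hp
  set A' := ((A * listMat n (slice1 n t)) * listMat n (slice2 n t)) *
      listMat n (slice3 n t A) with hA'
  have hjn : n - 1 - i.val < n := by omega
  have hp0 : Tt n t (n - 1 - i.val) < n := Tt_lt n t _ hjn (le_of_lt ht)
  set p0 := Tt n t (n - 1 - i.val) with hp0def
  -- invariant at column p0 (token i)
  have Hi : ∀ i'' : Fin n,
      (i'' = i → A i'' ⟨p0, hp0⟩ = 1) ∧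
      (i.val < i''.val → A i'' ⟨p0, hp0⟩ = 0) ∧
      (i''.val < i.val → Tt n t (n - 1 - i''.val) < p0 → A i'' ⟨p0, hp0⟩ = 0) :=
    fun i'' => hA i i'' ⟨p0, hp0⟩ rfl
  by_cases hpar : p0 % 2 = t % 2
  · by_cases hend : p0 + 1 < n
    · -- case A : token i moves right, p = p0 + 1
      have hstep := Tt_step_right n t _ hjn ht hpar hend
      have hpv : p.val = p0 + 1 := by omega
      -- the partner token a at position p0+1
      have hjRn : Tinv n t (p0+1) < n := Tinv_lt n t _ (by omega) (by omega)
      set jR := Tinv n t (p0+1) with hjRdef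
      have hTjR : Tt n t jR = p0 + 1 := Tt_Tinv n t _ (by omega) (by omega)
      have hjlt : n - 1 - i.val < jR :=
        tok_order n t _ jR ht hjn hjRn hpar hend hTjR
      set a := n - 1 - jR with hadef
      have han : a < n := by omega
      have hai : a < i.val := by omega
      have hTa : Tt n t (n - 1 - a) = p0 + 1 := by
        rw [show n - 1 - a = jR by omega]; exact hTjR
      -- invariant at column p0+1 (token a)
      have Ha : ∀ i'' : Fin n,
          (i'' = ⟨a, han⟩ → A i'' ⟨p0+1, hend⟩ = 1) ∧
          (a < i''.val → A i'' ⟨p0+1, hend⟩ = 0) ∧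
          (i''.val < a → Tt n t (n - 1 - i''.val) < p0 + 1 → A i'' ⟨p0+1, hend⟩ = 0) :=
        fun i'' => hA ⟨a, han⟩ i'' ⟨p0+1, hend⟩ hTa
      have hnu : nuv n t A p0 = A ⟨a, han⟩ ⟨p0, hp0⟩ := by
        rw [nuv, dif_pos hend]
      have hcol := (round_col_active n t A p0 hend hpar i').2
      rw [← hA'] at hcol
      have hpE : p = ⟨p0 + 1, hend⟩ := Fin.ext hpv
      rw [hpE, hcol]
      simp only [Fin.val_mk]
      refine ⟨?_, ?_, ?_⟩
      · intro he
        subst he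
        rw [(Hi i').1 rfl, (Ha i').2.1 hai, mul_zero, add_zero]
      · intro hlt
        rw [(Hi i').2.1 hlt, (Ha i').2.1 (by omega), mul_zero, add_zero]
      · intro hlt hq
        by_cases hia : i'.val = a
        · have hiE : i' = ⟨a, han⟩ := Fin.ext hia
          rw [hiE, (Ha ⟨a, han⟩).1 rfl, mul_one, ← hnu]
          exact z2d _
        · -- i' is neither of the two tokens of this box
          have hq'n : n - 1 - i'.val < n := by omega
          have hmv := Tt_move n t (n - 1 - i'.val) hq'n ht
          have hne1 : Tt n t (n - 1 - i'.val) ≠ p0 + 1 := by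
            intro hE
            have := Tinv_Tt n t (n - 1 - i'.val) hq'n (by omega)
            rw [hE] at this
            omega
          have hne0 : Tt n t (n - 1 - i'.val) ≠ p0 := by
            intro hE
            have := Tt_inj n t (n - 1 - i'.val) (n - 1 - i.val) hq'n hjn (by omega) hE
            omega
          have hq'lt : Tt n t (n - 1 - i'.val) < p0 := by omega
          rw [(Hi i').2.2 hlt hq'lt]
          rcases lt_or_gt_of_ne (fun h => hia h) with hc | hc
          · rw [(Ha i').2.2 hc (by omega), mul_zero, add_zero]
          · rw [(Ha i').2.1 hc, mul_zero, add_zero]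
    · -- case B : token i is at the right end, stays, column untouched
      have hstep := Tt_step_stay n t _ hjn ht hpar (by omega)
      have hpv : p.val = p0 := by omega
      have hpE : p = ⟨p0, hp0⟩ := Fin.ext hpv
      have huntA : A' i' p = A i' p := by
        rw [hpE]
        exact round_col_untouched n t A p0 hp0 (by omega)
          (by
            right
            intro hcon
            omega) i'
      rw [huntA, hpE]
      simp only [Fin.val_mk]
      refine ⟨?_, ?_, ?_⟩
      · intro he; subst he; exact (Hi i').1 rfl
      · intro hlt; exact (Hi i').2.1 hlt
      · intro hlt hq
        have hq'n : n - 1 - i'.val < n := by omega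
        have hmv := Tt_move n t (n - 1 - i'.val) hq'n ht
        have hne0 : Tt n t (n - 1 - i'.val) ≠ p0 := by
          intro hE
          have := Tt_inj n t (n - 1 - i'.val) (n - 1 - i.val) hq'n hjn (by omega) hE
          omega
        exact (Hi i').2.2 hlt (by omega)
  · -- case C : token i moves left (or is stuck at 0)
    have hstep := Tt_step_left n t _ hjn ht hpar
    by_cases hz : p0 = 0
    · have hpv : p.val = 0 := by omega
      have hpE : p = ⟨p0, hp0⟩ := Fin.ext (by simp; omega)
      have huntA : A' i' p = A i' p := by
        rw [hpE]
        exact round_col_untouched n t A p0 hp0 (by omega) (by left; omega) i'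
      rw [huntA, hpE]
      simp only [Fin.val_mk]
      refine ⟨?_, ?_, ?_⟩
      · intro he; subst he; exact (Hi i').1 rfl
      · intro hlt; exact (Hi i').2.1 hlt
      · intro hlt hq; exact absurd hq (by omega)
    · -- case C2 : active pair (p0-1, p0), token i moves to p0-1
      have hpv : p.val = p0 - 1 := by omega
      have hactL : (p0 - 1) % 2 = t % 2 := by omega
      have hendL : (p0 - 1) + 1 < n := by omega
      have hcol := (round_col_active n t A (p0 - 1) hendL hactL i').1
      rw [← hA'] at hcol
      have hpE : p = ⟨p0 - 1, by omega⟩ := Fin.ext hpv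
      have hIdx : (⟨(p0 - 1) + 1, hendL⟩ : Fin n) = ⟨p0, hp0⟩ := Fin.ext (by simp; omega)
      rw [hpE, hcol, hIdx]
      simp only [Fin.val_mk]
      refine ⟨?_, ?_, ?_⟩
      · intro he; subst he; exact (Hi i').1 rfl
      · intro hlt; exact (Hi i').2.1 hlt
      · intro hlt hq
        have hq'n : n - 1 - i'.val < n := by omega
        have hmv := Tt_move n t (n - 1 - i'.val) hq'n ht
        exact (Hi i').2.2 hlt (by omega)

lemma antidiag (n : ℕ) (N : Matrix (Fin n) (Fin n) (ZMod 2)) (hNW : IsNW n N)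
    (hN : IsUnit N.det) : ∀ i : Fin n, N i ⟨n - 1 - i.val, by omega⟩ = 1 := by
  have hDT : (N.submatrix id ⇑(Fin.revPerm (n := n))).BlockTriangular id := by
    intro i j hij
    show N i (Fin.rev j) = 0
    apply hNW
    rw [Fin.val_rev]
    simp only [id] at hij
    omega
  have hdet := Matrix.det_of_upperTriangular hDT
  have hunit : IsUnit (N.submatrix id ⇑(Fin.revPerm (n := n))).det := by
    rw [Matrix.det_permute']
    apply IsUnit.mul _ hN
    rcases Int.units_eq_one_or (Equiv.Perm.sign (Fin.revPerm (n := n))) with h | h <;>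
      rw [h] <;> simp
  rw [hdet] at hunit
  intro i
  have hi : IsUnit ((N.submatrix id ⇑(Fin.revPerm (n := n))) i i) :=
    isUnit_of_dvd_unit (Finset.dvd_prod_of_mem (fun j => (N.submatrix id ⇑(Fin.revPerm (n := n))) j j) (Finset.mem_univ i)) hunit
  have he : (N.submatrix id ⇑(Fin.revPerm (n := n))) i i = N i ⟨n - 1 - i.val, by omega⟩ := by
    show N i (Fin.rev i) = _
    congr 1
    exact Fin.ext (by rw [Fin.val_rev]; simp; omega)
  rw [he] at hi
  exact zmod2_ne_zero hi.ne_zero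

lemma key (n : ℕ) : ∀ m t (A : Matrix (Fin n) (Fin n) (ZMod 2)), t + m = n → RInv n t A →
    ∃ C, ValidCircuit n C ∧ C.length ≤ 3 * m ∧ A * circuitMat n C = 1 := by
  intro m
  induction m with
  | zero =>
      intro t A htm hA
      refine ⟨[], ?_, by simp, ?_⟩
      · intro s hs; simp at hs
      · have hA1 : A = 1 := inv_last n A (by rwa [show t = n by omega] at hA)
        simp [circuitMat, hA1]
  | succ m ih =>
      intro t A htm hA
      have ht : t < n := by omega
      obtain ⟨C, hC1, hC2, hC3⟩ := ih (t+1)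
        (((A * listMat n (slice1 n t)) * listMat n (slice2 n t)) * listMat n (slice3 n t A))
        (by omega) (inv_step n t ht A hA)
      refine ⟨slice1 n t :: slice2 n t :: slice3 n t A :: C, ?_, ?_, ?_⟩
      · intro s hs
        simp only [List.mem_cons] at hs
        rcases hs with rfl | rfl | rfl | hs
        · exact valid_slice1 n t
        · exact valid_slice2 n t
        · exact valid_slice3 n t A
        · exact hC1 s hs
      · simp only [List.length_cons]
        omega
      · have hcm : circuitMat n (slice1 n t :: slice2 n t :: slice3 n t A :: C)
            = listMat n (slice1 n t) * (listMat n (slice2 n t) *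
                (listMat n (slice3 n t A) * circuitMat n C)) := by
          simp [circuitMat]
        rw [hcm, ← mul_assoc, ← mul_assoc, ← mul_assoc]
        exact hC3

/-- every invertible northwest-triangular matrix `N` over `F_2` can
be reduced to the identity by a circuit of depth at most `3n`: `N · R = I`. -/
theorem stmt13 (n : ℕ) (N : Matrix (Fin n) (Fin n) (ZMod 2))
    (hNW : IsNW n N) (hN : IsUnit N.det) :
    ∃ R : List (List (ℕ × Bool)),
      ValidCircuit n R ∧ R.length ≤ 3 * n ∧ N * circuitMat n R = 1 := by
  obtain ⟨C, h1, h2, h3⟩ := key n n 0 N (by omega)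
    (inv_start n N hNW (antidiag n N hNW hN))
  exact ⟨C, h1, h2, h3⟩
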